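/- arXiv:1812.05381 — 2 statements merged into one kernel-verified Lean document; each statement's English description precedes it below -/
import Mathlib

section
/- Let n ≥ 1 and let p_1,...,p_n ∈ [0,1] with associated values V_1,...,V_n defined by the backward recurrence. If there exists a subset S ⊆ {1,...,n} with |S| = m ≥ 1 such that p_i ≥ 1/m for every i ∈ S, then V_1 > 1/2 − 1/(2e²). -/
/-!
If `V 1 ≥ 1/2` there is nothing to prove. Otherwise, since a step never decreases the value,
`V k ≤ V 1 < 1/2` for every `k`, so the maximum in the recurrence is always `1 - V (k + 1)`
and the gap `1/2 - V k` obeys the linear recursion `1/2 - V k = (1 - 2 p k) (1/2 - V (k + 1))`.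
Hence `1/2 - V 1 = (1/2) ∏ k, (1 - 2 p k)` with every factor in `(0, 1]`. Keeping only the `m`
factors indexed by `S`, each at most `1 - 2/m`, gives `1/2 - V 1 ≤ (1/2) (1 - 2/m)^m < 1/(2 e²)`.
-/

open Finset Real

def lastSuccessStep (p v : ℝ) : ℝ := p * max v (1 - v) + (1 - p) * v

lemma le_lastSuccessStep {p : ℝ} (hp : 0 ≤ p) (v : ℝ) : v ≤ lastSuccessStep p v := by
  unfold lastSuccessStep
  nlinarith [le_max_left v (1 - v)]

lemma half_sub_lastSuccessStep {v : ℝ} (hv : v ≤ 1 / 2) (p : ℝ) :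
    1 / 2 - lastSuccessStep p v = (1 - 2 * p) * (1 / 2 - v) := by
  rw [lastSuccessStep, max_eq_right (by linarith)]
  ring

lemma Finset.eq_prod_Ico_mul_of_eq_mul_succ {M : Type*} [CommMonoid M] {d c : ℕ → M} {a b : ℕ}
    (hab : a ≤ b) (h : ∀ k, a ≤ k → k < b → d k = c k * d (k + 1)) :
    d a = (∏ k ∈ Ico a b, c k) * d b := by
  induction b, hab using Nat.le_induction with
  | base => simp
  | succ b hab ih =>
    rw [ih fun k hak hkb => h k hak (by omega), h b hab (by omega),
      ← prod_Ico_mul_eq_prod_Ico_add_one hab, mul_assoc]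

lemma Finset.prod_le_pow_card_of_subset {ι R : Type*} [CommSemiring R] [PartialOrder R]
    [IsOrderedRing R] {s t : Finset ι} {f : ι → R} {c : R} (hst : s ⊆ t)
    (h0 : ∀ i ∈ t, 0 ≤ f i) (h1 : ∀ i ∈ t, f i ≤ 1) (hc : ∀ i ∈ s, f i ≤ c) :
    ∏ i ∈ t, f i ≤ c ^ #s :=
  calc ∏ i ∈ t, f i ≤ ∏ i ∈ s, f i :=
        prod_le_prod_of_subset_of_le_one hst h0 fun i hi _ => h1 i hi
    _ ≤ ∏ _i ∈ s, c := prod_le_prod (fun i hi => h0 i (hst hi)) hc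
    _ = c ^ #s := prod_const c

lemma one_sub_div_pow_lt_exp_neg {m : ℕ} {t : ℝ} (ht : 0 < t) (htm : t ≤ m) :
    (1 - t / m) ^ m < exp (-t) := by
  have hm : (0 : ℝ) < m := ht.trans_le htm
  calc (1 - t / m) ^ m < exp (-(t / m)) ^ m := by
        refine pow_lt_pow_left₀ ?_ (sub_nonneg.2 ((div_le_one hm).2 htm))
          (by exact_mod_cast hm.ne')
        linarith [add_one_lt_exp (neg_ne_zero.2 (div_pos ht hm).ne')]
    _ = exp (-t) := by
        rw [← exp_nat_mul]
        field_simp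

section LastSuccess

variable {n : ℕ} {p V : ℕ → ℝ}

lemma antitoneOn_of_eq_lastSuccessStep (hp : ∀ k, 1 ≤ k → k < n → 0 ≤ p k)
    (hV : ∀ k, 1 ≤ k → k < n → V k = lastSuccessStep (p k) (V (k + 1))) :
    AntitoneOn V (Set.Icc 1 n) :=
  antitoneOn_of_succ_le Set.ordConnected_Icc fun k _ hk hk1 => by
    have hkn : k < n := by simp only [Order.succ_eq_add_one, Set.mem_Icc] at hk1; omega
    rw [Order.succ_eq_add_one, hV k hk.1 hkn]
    exact le_lastSuccessStep (hp k hk.1 hkn) _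

lemma half_sub_eq_prod_div_two (hn : 1 ≤ n) (hVn : V n = p n)
    (hV : ∀ k, 1 ≤ k → k < n → V k = lastSuccessStep (p k) (V (k + 1)))
    (hhalf : ∀ k, 1 ≤ k → k ≤ n → V k ≤ 1 / 2) :
    1 / 2 - V 1 = (∏ k ∈ Icc 1 n, (1 - 2 * p k)) / 2 := by
  have hgap : ∀ k, 1 ≤ k → k < n → 1 / 2 - V k = (1 - 2 * p k) * (1 / 2 - V (k + 1)) :=
    fun k hk hkn => by rw [hV k hk hkn, half_sub_lastSuccessStep (hhalf (k + 1) (by omega) hkn)]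
  rw [eq_prod_Ico_mul_of_eq_mul_succ hn hgap, hVn, ← prod_Ico_mul_eq_prod_Icc hn]
  ring

lemma one_sub_two_mul_pos (hVn : V n = p n)
    (hV : ∀ k, 1 ≤ k → k < n → V k = lastSuccessStep (p k) (V (k + 1)))
    (hhalf : ∀ k, 1 ≤ k → k ≤ n → V k < 1 / 2) {k : ℕ} (hk : 1 ≤ k) (hkn : k ≤ n) :
    0 < 1 - 2 * p k := by
  rcases hkn.eq_or_lt with rfl | hkn
  · linarith [hVn ▸ hhalf k hk le_rfl]
  · have hnext := hhalf (k + 1) (by omega) hkn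
    refine pos_of_mul_pos_left ?_ (sub_nonneg.2 hnext.le)
    rw [← half_sub_lastSuccessStep hnext.le, ← hV k hk hkn]
    linarith [hhalf k hk hkn.le]

end LastSuccess

theorem adversarial_LSP_lower_bound_subset_general
    (n : ℕ) (p V : ℕ → ℝ)
    (hp : ∀ k, 1 ≤ k → k ≤ n → p k ∈ Set.Icc (0 : ℝ) 1)
    (hVn : V n = p n)
    (hV : ∀ k, 1 ≤ k → k < n →
      V k = p k * max (V (k + 1)) (1 - V (k + 1)) + (1 - p k) * V (k + 1))
    (S : Finset ℕ) (hS : S ⊆ Finset.Icc 1 n) (m : ℕ) (hm : 1 ≤ m)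
    (hSm : S.card = m)
    (hbig : ∀ i ∈ S, 1 / (m : ℝ) ≤ p i) :
    1 / 2 - 1 / (2 * Real.exp 2) < V 1 := by
  rcases le_or_gt (1 / 2) (V 1) with hV1 | hV1
  · have : 0 < 1 / (2 * exp 2) := by positivity
    linarith
  obtain ⟨i, hi⟩ : S.Nonempty := card_pos.1 (hSm ▸ hm)
  have hn : 1 ≤ n := (mem_Icc.1 (hS hi)).1.trans (mem_Icc.1 (hS hi)).2
  have hanti := antitoneOn_of_eq_lastSuccessStep (fun k hk hkn => (hp k hk hkn.le).1) hV
  have hhalf : ∀ k, 1 ≤ k → k ≤ n → V k < 1 / 2 := fun k hk hkn =>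
    (hanti ⟨le_rfl, hn⟩ ⟨hk, hkn⟩ hk).trans_lt hV1
  have hpos : ∀ k ∈ Icc 1 n, 0 < 1 - 2 * p k := fun k hk =>
    one_sub_two_mul_pos hVn hV hhalf (mem_Icc.1 hk).1 (mem_Icc.1 hk).2
  have hm2 : (2 : ℝ) ≤ m := by
    have hm0 : (0 : ℝ) < m := by exact_mod_cast hm
    have := (div_le_iff₀ hm0).1 (hbig i hi)
    nlinarith [hpos i (hS hi)]
  have hprod : ∏ k ∈ Icc 1 n, (1 - 2 * p k) ≤ (1 - 2 / m) ^ m := by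
    rw [← hSm]
    refine prod_le_pow_card_of_subset hS (fun k hk => (hpos k hk).le)
      (fun k hk => by linarith [(hp k (mem_Icc.1 hk).1 (mem_Icc.1 hk).2).1]) fun k hk => ?_
    linarith [hSm ▸ hbig k hk, show (2 : ℝ) / #S = 2 * (1 / #S) by ring]
  have hexp : 1 / (2 * exp 2) = exp (-2) / 2 := by rw [exp_neg]; ring
  linarith [half_sub_eq_prod_div_two hn hVn hV fun k hk hkn => (hhalf k hk hkn).le,
    one_sub_div_pow_lt_exp_neg two_pos hm2]

/-- If there is a subset `S ⊆ {1, …, n}` of cardinality `m ≥ 1`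
with `p i ≥ 1/m` for every `i ∈ S`, then `V 1 > 1/2 - 1/(2e²)`. -/
theorem adversarial_LSP_lower_bound_subset
    (n : ℕ) (hn : 1 ≤ n) (p V : ℕ → ℝ)
    (hp : ∀ k, 1 ≤ k → k ≤ n → p k ∈ Set.Icc (0 : ℝ) 1)
    (hVn : V n = p n)
    (hV : ∀ k, 1 ≤ k → k < n →
      V k = p k * max (V (k + 1)) (1 - V (k + 1)) + (1 - p k) * V (k + 1))
    (S : Finset ℕ) (hS : S ⊆ Finset.Icc 1 n) (m : ℕ) (hm : 1 ≤ m)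
    (hSm : S.card = m)
    (hbig : ∀ i ∈ S, 1 / (m : ℝ) ≤ p i) :
    1 / 2 - 1 / (2 * Real.exp 2) < V 1 :=
  adversarial_LSP_lower_bound_subset_general n p V hp hVn hV S hS m hm hSm hbig
end

section
/- Let n ≥ 2 and let p_1,...,p_n satisfy 0 < p_i < 1/2 for every i, with associated first-player value V_1 defined by the backward recurrence. For any index k with 1 ≤ k ≤ n, let V'_1 denote the first-player value of the (n−1)-trial game with parameters p_1,...,p_{k−1},p_{k+1},...,p_n (the game obtained by excluding trial k). Then V_1 > V'_1. -/
/-! Once all `p i ≤ 1/2`, every value stays at most `1/2`, so the first player always takes the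
branch `1 - V (k+1)` and the recurrence becomes `1/2 - V k = (1 - 2 p k) (1/2 - V (k+1))`.
Hence `1/2 - V 1 = (∏ i ∈ [1, n], (1 - 2 p i)) / 2`, and excluding trial `k` removes the factor
`1 - 2 p k ∈ (0, 1)` from a positive product, which raises `1/2 - V 1`. -/

/-- The value `V k` of the adversarial Last-Success-Problem with `n` Bernoulli
trials of parameters `p 1, …, p n`, defined by the backward recurrence
`V n = p n` and `V k = p k * max (V (k+1)) (1 - V (k+1)) + (1 - p k) * V (k+1)`
for `k < n`. -/
noncomputable def advVal (n : ℕ) (p : ℕ → ℝ) : ℕ → ℝ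
  | k =>
    if _h : k < n then
      p k * max (advVal n p (k + 1)) (1 - advVal n p (k + 1))
        + (1 - p k) * advVal n p (k + 1)
    else p n
  termination_by k => n - k
  decreasing_by simp_wf; omega

open Finset

theorem Finset.prod_Icc_eq_mul_prod_skip {M : Type*} [CommMonoid M] (g : ℕ → M) {k m : ℕ}
    (hk1 : 1 ≤ k) (hkm : k ≤ m + 1) :
    ∏ i ∈ Icc 1 (m + 1), g i = g k * ∏ i ∈ Icc 1 m, g (if i < k then i else i + 1) := by
  rw [← Ico_add_one_right_eq_Icc, ← Ico_add_one_right_eq_Icc,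
    ← prod_Ico_consecutive _ hk1 (by omega : k ≤ m + 1 + 1),
    ← prod_Ico_consecutive _ hk1 hkm, prod_eq_prod_Ico_succ_bot (by omega : k < m + 1 + 1)]
  have below : ∏ i ∈ Ico 1 k, g (if i < k then i else i + 1) = ∏ i ∈ Ico 1 k, g i :=
    prod_congr rfl fun i hi => by rw [if_pos (mem_Ico.1 hi).2]
  have above : ∏ i ∈ Ico k (m + 1), g (if i < k then i else i + 1)
      = ∏ i ∈ Ico (k + 1) (m + 1 + 1), g i := by
    rw [← prod_Ico_add']
    exact prod_congr rfl fun i hi => by rw [if_neg (not_lt.2 (mem_Ico.1 hi).1)]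
  rw [below, above, mul_left_comm]

theorem advVal_self (n : ℕ) (p : ℕ → ℝ) : advVal n p n = p n := by
  rw [advVal, dif_neg (lt_irrefl n)]

theorem advVal_of_lt {n k : ℕ} (p : ℕ → ℝ) (h : k < n) :
    advVal n p k = p k * max (advVal n p (k + 1)) (1 - advVal n p (k + 1))
      + (1 - p k) * advVal n p (k + 1) := by
  rw [advVal, dif_pos h]

theorem advVal_eq_half_sub_prod {n : ℕ} (p : ℕ → ℝ) {j : ℕ} (hjn : j ≤ n)
    (hp : ∀ i ∈ Icc j n, p i ≤ 1 / 2) :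
    advVal n p j = 1 / 2 - (∏ i ∈ Icc j n, (1 - 2 * p i)) / 2 := by
  induction hjn using Nat.decreasingInduction with
  | self => rw [advVal_self, Icc_self, prod_singleton]; ring
  | of_succ j hj ih =>
    set P := ∏ i ∈ Icc (j + 1) n, (1 - 2 * p i)
    have hP : 0 ≤ P := prod_nonneg fun i hi =>
      by linarith [hp i (Icc_subset_Icc_left j.le_succ hi)]
    rw [advVal_of_lt p hj, ih fun i hi => hp i (Icc_subset_Icc_left j.le_succ hi),
      max_eq_right (by linarith), ← mul_prod_Ioc_eq_prod_Icc hj.le, ← Icc_add_one_left_eq_Ioc]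
    ring

/-- If `n ≥ 2` and `0 < p i < 1/2` for all `i ∈ [1,n]`, then
excluding any trial `k ∈ [1,n]` strictly decreases the first player's value:
`V₁ > V'₁`, where `V'₁` is the value of the `(n-1)`-trial game with parameters
`p 1, …, p (k-1), p (k+1), …, p n`. -/
theorem adversarial_LSP_exclude_trial
    (n : ℕ) (hn : 2 ≤ n) (p : ℕ → ℝ)
    (hp : ∀ i, 1 ≤ i → i ≤ n → 0 < p i ∧ p i < 1 / 2)
    (k : ℕ) (hk1 : 1 ≤ k) (hkn : k ≤ n)
    (q : ℕ → ℝ) (hq : ∀ i, q i = if i < k then p i else p (i + 1)) :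
    advVal (n - 1) q 1 < advVal n p 1 := by
  obtain ⟨m, rfl⟩ : ∃ m, n = m + 1 := ⟨n - 1, by omega⟩
  have hq_eq : ∀ i, 1 - 2 * q i = 1 - 2 * p (if i < k then i else i + 1) := fun i => by
    rw [hq, apply_ite p]
  have hqp : ∀ i ∈ Icc 1 m, 0 < 1 - 2 * q i := fun i hi => by
    obtain ⟨hi1, him⟩ := mem_Icc.1 hi
    rw [hq]; split_ifs
    · linarith [(hp i hi1 (by omega)).2]
    · linarith [(hp (i + 1) (by omega) (by omega)).2]
  have hQ : 0 < ∏ i ∈ Icc 1 m, (1 - 2 * q i) := prod_pos hqp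
  rw [Nat.add_sub_cancel,
    advVal_eq_half_sub_prod q (by omega) fun i hi => by linarith [hqp i hi],
    advVal_eq_half_sub_prod p (by omega) fun i hi =>
      (hp i (mem_Icc.1 hi).1 (mem_Icc.1 hi).2).2.le,
    prod_Icc_eq_mul_prod_skip (fun i => 1 - 2 * p i) hk1 hkn]
  simp only [← hq_eq]
  have hpk := hp k hk1 hkn
  linarith [mul_lt_of_lt_one_left hQ (by linarith : 1 - 2 * p k < 1)]
end
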